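/- arXiv:1306.0306 — 8 statements merged into one kernel-verified Lean document; each statement's English description precedes it below -/
import Mathlib

section
/- If the profile curve is unit-speed spacelike, i.e. −(α₁′)² + (α₃′)² + (α₄′)² = 1, then the second fundamental form components of the boost-invariant surface with respect to the normal frame e₃, e₄ are given by: B(∂²φ/∂s², e₃) = −c(s), B(∂²φ/∂s², e₄) = d(s), B(∂²φ/∂t∂s, e₃) = B(∂²φ/∂t∂s, e₄) = 0, B(∂²φ/∂t², e₃) = −α₁(s)√(1+α₁′(s)²) (equivalently (1/α₁²)B(∂²φ/∂t², e₃) = −b(s)), and B(∂²φ/∂t², e₄) = 0. -/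
noncomputable section
open Real

/-- Minkowski 4-space `E₁⁴` modeled on `ℝ × ℝ × ℝ × ℝ` with the Lorentzian
bilinear form `B(x,y) = −x₁y₁ + x₂y₂ + x₃y₃ + x₄y₄`. -/
def B (x y : ℝ × ℝ × ℝ × ℝ) : ℝ :=
  -(x.1 * y.1) + x.2.1 * y.2.1 + x.2.2.1 * y.2.2.1 + x.2.2.2 * y.2.2.2

/-- The boost-invariant surface `φ(t,s) = (α₁(s)cosh t, α₁(s)sinh t, α₃(s), α₄(s))`. -/
def phi (α₁ α₃ α₄ : ℝ → ℝ) (t s : ℝ) : ℝ × ℝ × ℝ × ℝ :=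
  (α₁ s * Real.cosh t, α₁ s * Real.sinh t, α₃ s, α₄ s)

/-- Tangent frame vector `e₁ = (α₁′cosh t, α₁′sinh t, α₃′, α₄′)`. -/
def E1 (α₁ α₃ α₄ : ℝ → ℝ) (t s : ℝ) : ℝ × ℝ × ℝ × ℝ :=
  (deriv α₁ s * Real.cosh t, deriv α₁ s * Real.sinh t, deriv α₃ s, deriv α₄ s)

/-- Tangent frame vector `e₂ = (sinh t, cosh t, 0, 0)`. -/
def E2 (t : ℝ) : ℝ × ℝ × ℝ × ℝ := (Real.sinh t, Real.cosh t, 0, 0)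

/-- Normal frame vector
`e₃ = (1/√(1+α₁′²))·((1+α₁′²)cosh t, (1+α₁′²)sinh t, α₁′α₃′, α₁′α₄′)`. -/
def E3 (α₁ α₃ α₄ : ℝ → ℝ) (t s : ℝ) : ℝ × ℝ × ℝ × ℝ :=
  (1 / Real.sqrt (1 + (deriv α₁ s) ^ 2)) •
    (((1 + (deriv α₁ s) ^ 2) * Real.cosh t, (1 + (deriv α₁ s) ^ 2) * Real.sinh t,
      deriv α₁ s * deriv α₃ s, deriv α₁ s * deriv α₄ s) : ℝ × ℝ × ℝ × ℝ)

/-- Normal frame vector `e₄ = (1/√(1+α₁′²))·(0, 0, −α₄′, α₃′)`. -/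
def E4 (α₁ α₃ α₄ : ℝ → ℝ) (s : ℝ) : ℝ × ℝ × ℝ × ℝ :=
  (1 / Real.sqrt (1 + (deriv α₁ s) ^ 2)) •
    ((0, 0, -(deriv α₄ s), deriv α₃ s) : ℝ × ℝ × ℝ × ℝ)

/-- `a(s) = α₁′/√(1+α₁′²)`. -/
def aF (α₁ : ℝ → ℝ) (s : ℝ) : ℝ := deriv α₁ s / Real.sqrt (1 + (deriv α₁ s) ^ 2)

/-- `b(s) = √(1+α₁′²)/α₁`. -/
def bF (α₁ : ℝ → ℝ) (s : ℝ) : ℝ := Real.sqrt (1 + (deriv α₁ s) ^ 2) / α₁ s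

/-- `c(s) = α₁″/√(1+α₁′²)`. -/
def cF (α₁ : ℝ → ℝ) (s : ℝ) : ℝ := deriv (deriv α₁) s / Real.sqrt (1 + (deriv α₁ s) ^ 2)

/-- `d(s) = (−α₃″α₄′ + α₄″α₃′)/√(1+α₁′²)`. -/
def dF (α₁ α₃ α₄ : ℝ → ℝ) (s : ℝ) : ℝ :=
  (-(deriv (deriv α₃) s) * deriv α₄ s + deriv (deriv α₄) s * deriv α₃ s) /
    Real.sqrt (1 + (deriv α₁ s) ^ 2)

lemma deriv_phi_s (α₁ α₃ α₄ : ℝ → ℝ) (h1 : Differentiable ℝ α₁)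
    (h3 : Differentiable ℝ α₃) (h4 : Differentiable ℝ α₄) (t u : ℝ) :
    deriv (fun v => phi α₁ α₃ α₄ t v) u =
      (deriv α₁ u * Real.cosh t, deriv α₁ u * Real.sinh t, deriv α₃ u, deriv α₄ u) :=
  ((((h1 u).hasDerivAt.mul_const _).prodMk
    (((h1 u).hasDerivAt.mul_const _).prodMk
      ((h3 u).hasDerivAt.prodMk (h4 u).hasDerivAt))).deriv)

lemma deriv_phi_t (α₁ α₃ α₄ : ℝ → ℝ) (t s : ℝ) :
    deriv (fun u => phi α₁ α₃ α₄ u s) t =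
      (α₁ s * Real.sinh t, α₁ s * Real.cosh t, 0, 0) := by
  have h : HasDerivAt (fun u => phi α₁ α₃ α₄ u s)
      (α₁ s * Real.sinh t, α₁ s * Real.cosh t, 0, 0) t :=
    ((Real.hasDerivAt_cosh t).const_mul (α₁ s)).prodMk
      (((Real.hasDerivAt_sinh t).const_mul (α₁ s)).prodMk
        ((hasDerivAt_const t (α₃ s)).prodMk (hasDerivAt_const t (α₄ s))))
  exact h.deriv

/-- the second fundamental form components of the boost-invariant
surface with respect to the normal frame `e₃, e₄`. -/
theorem second_fundamental_form
    (α₁ α₃ α₄ : ℝ → ℝ) (hα₁ : ContDiff ℝ (⊤ : ℕ∞) α₁) (hα₃ : ContDiff ℝ (⊤ : ℕ∞) α₃)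
    (hα₄ : ContDiff ℝ (⊤ : ℕ∞) α₄) (hpos : ∀ s : ℝ, 0 < α₁ s)
    (hunit : ∀ s : ℝ,
      -(deriv α₁ s) ^ 2 + (deriv α₃ s) ^ 2 + (deriv α₄ s) ^ 2 = 1) :
    ∀ t s : ℝ,
      B (deriv (fun u => deriv (fun v => phi α₁ α₃ α₄ t v) u) s) (E3 α₁ α₃ α₄ t s)
        = -(cF α₁ s) ∧
      B (deriv (fun u => deriv (fun v => phi α₁ α₃ α₄ t v) u) s) (E4 α₁ α₃ α₄ s)
        = dF α₁ α₃ α₄ s ∧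
      B (deriv (fun u => deriv (fun v => phi α₁ α₃ α₄ u v) s) t) (E3 α₁ α₃ α₄ t s) = 0 ∧
      B (deriv (fun u => deriv (fun v => phi α₁ α₃ α₄ u v) s) t) (E4 α₁ α₃ α₄ s) = 0 ∧
      B (deriv (fun u => deriv (fun v => phi α₁ α₃ α₄ v s) u) t) (E3 α₁ α₃ α₄ t s)
        = -(α₁ s * Real.sqrt (1 + (deriv α₁ s) ^ 2)) ∧
      (1 / (α₁ s) ^ 2) *
        B (deriv (fun u => deriv (fun v => phi α₁ α₃ α₄ v s) u) t) (E3 α₁ α₃ α₄ t s)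
        = -(bF α₁ s) ∧
      B (deriv (fun u => deriv (fun v => phi α₁ α₃ α₄ v s) u) t) (E4 α₁ α₃ α₄ s) = 0 := by
  intro t s
  have hd1 : Differentiable ℝ α₁ := hα₁.differentiable (by simp)
  have hd3 : Differentiable ℝ α₃ := hα₃.differentiable (by simp)
  have hd4 : Differentiable ℝ α₄ := hα₄.differentiable (by simp)
  have hc1 := (contDiff_infty_iff_deriv.mp (hα₁.of_le (by simp))).2
  have hc3 := (contDiff_infty_iff_deriv.mp (hα₃.of_le (by simp))).2
  have hc4 := (contDiff_infty_iff_deriv.mp (hα₄.of_le (by simp))).2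
  have hd1' : Differentiable ℝ (deriv α₁) := hc1.differentiable (by simp)
  have hd3' : Differentiable ℝ (deriv α₃) := hc3.differentiable (by simp)
  have hd4' : Differentiable ℝ (deriv α₄) := hc4.differentiable (by simp)
  -- second s-derivative
  have hss : deriv (fun u => deriv (fun v => phi α₁ α₃ α₄ t v) u) s =
      (deriv (deriv α₁) s * Real.cosh t, deriv (deriv α₁) s * Real.sinh t,
        deriv (deriv α₃) s, deriv (deriv α₄) s) := by
    have : (fun u => deriv (fun v => phi α₁ α₃ α₄ t v) u) =
        (fun u => ((deriv α₁ u * Real.cosh t, deriv α₁ u * Real.sinh t,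
          deriv α₃ u, deriv α₄ u) : ℝ × ℝ × ℝ × ℝ)) :=
      funext fun u => deriv_phi_s α₁ α₃ α₄ hd1 hd3 hd4 t u
    rw [this]
    exact ((((hd1' s).hasDerivAt.mul_const _).prodMk
      (((hd1' s).hasDerivAt.mul_const _).prodMk
        ((hd3' s).hasDerivAt.prodMk (hd4' s).hasDerivAt))).deriv)
  -- mixed derivative  ∂t ∂s
  have hts : deriv (fun u => deriv (fun v => phi α₁ α₃ α₄ u v) s) t =
      (deriv α₁ s * Real.sinh t, deriv α₁ s * Real.cosh t, 0, 0) := by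
    have : (fun u => deriv (fun v => phi α₁ α₃ α₄ u v) s) =
        (fun u => ((deriv α₁ s * Real.cosh u, deriv α₁ s * Real.sinh u,
          deriv α₃ s, deriv α₄ s) : ℝ × ℝ × ℝ × ℝ)) :=
      funext fun u => deriv_phi_s α₁ α₃ α₄ hd1 hd3 hd4 u s
    rw [this]
    exact (((Real.hasDerivAt_cosh t).const_mul (deriv α₁ s)).prodMk
      (((Real.hasDerivAt_sinh t).const_mul (deriv α₁ s)).prodMk
        ((hasDerivAt_const t (deriv α₃ s)).prodMk (hasDerivAt_const t (deriv α₄ s))))).deriv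
  -- second t-derivative
  have htt : deriv (fun u => deriv (fun v => phi α₁ α₃ α₄ v s) u) t =
      (α₁ s * Real.cosh t, α₁ s * Real.sinh t, 0, 0) := by
    have : (fun u => deriv (fun v => phi α₁ α₃ α₄ v s) u) =
        (fun u => ((α₁ s * Real.sinh u, α₁ s * Real.cosh u, 0, 0) : ℝ × ℝ × ℝ × ℝ)) :=
      funext fun u => deriv_phi_t α₁ α₃ α₄ u s
    rw [this]
    exact (((Real.hasDerivAt_sinh t).const_mul (α₁ s)).prodMk
      (((Real.hasDerivAt_cosh t).const_mul (α₁ s)).prodMk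
        ((hasDerivAt_const t (0:ℝ)).prodMk (hasDerivAt_const t (0:ℝ))))).deriv
  -- key identity from differentiating hunit
  have hkey : deriv (deriv α₃) s * deriv α₃ s + deriv (deriv α₄) s * deriv α₄ s
      = deriv α₁ s * deriv (deriv α₁) s := by
    have h : HasDerivAt (fun u => -(deriv α₁ u) ^ 2 + (deriv α₃ u) ^ 2 + (deriv α₄ u) ^ 2)
        (-(2 * deriv α₁ s * deriv (deriv α₁) s) + 2 * deriv α₃ s * deriv (deriv α₃) s
          + 2 * deriv α₄ s * deriv (deriv α₄) s) s := by
      have h1 : HasDerivAt (fun u => (deriv α₁ u) ^ 2) (2 * deriv α₁ s * deriv (deriv α₁) s) s := by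
        simpa [mul_comm, mul_assoc, mul_left_comm] using ((hd1' s).hasDerivAt.fun_pow 2)
      have h3 : HasDerivAt (fun u => (deriv α₃ u) ^ 2) (2 * deriv α₃ s * deriv (deriv α₃) s) s := by
        simpa [mul_comm, mul_assoc, mul_left_comm] using ((hd3' s).hasDerivAt.fun_pow 2)
      have h4 : HasDerivAt (fun u => (deriv α₄ u) ^ 2) (2 * deriv α₄ s * deriv (deriv α₄) s) s := by
        simpa [mul_comm, mul_assoc, mul_left_comm] using ((hd4' s).hasDerivAt.fun_pow 2)
      exact (h1.neg.add h3).add h4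
    have hfun : (fun u => -(deriv α₁ u) ^ 2 + (deriv α₃ u) ^ 2 + (deriv α₄ u) ^ 2)
        = fun _ => (1:ℝ) := funext hunit
    have h0 := h.deriv
    rw [hfun, deriv_const] at h0
    nlinarith [h0]
  have hW : (0:ℝ) < 1 + (deriv α₁ s) ^ 2 := by positivity
  have hq : Real.sqrt (1 + (deriv α₁ s) ^ 2) * Real.sqrt (1 + (deriv α₁ s) ^ 2)
      = 1 + (deriv α₁ s) ^ 2 := Real.mul_self_sqrt hW.le
  have hne : Real.sqrt (1 + (deriv α₁ s) ^ 2) ≠ 0 := by positivity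
  have hch : Real.cosh t ^ 2 - Real.sinh t ^ 2 = 1 := Real.cosh_sq_sub_sinh_sq t
  have hane : α₁ s ≠ 0 := (hpos s).ne'
  refine ⟨?_, ?_, ?_, ?_, ?_, ?_, ?_⟩
  · rw [hss]; simp only [B, E3, Prod.smul_mk, smul_eq_mul, cF]
    field_simp
    linear_combination (-(deriv (deriv α₁) s) * (1 + (deriv α₁ s) ^ 2)) * hch +
      deriv α₁ s * hkey
  · rw [hss]; simp only [B, E4, Prod.smul_mk, smul_eq_mul, dF]
    field_simp
    linear_combination (0:ℝ) * hq
  · rw [hts]; simp only [B, E3, Prod.smul_mk, smul_eq_mul]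
    ring
  · rw [hts]; simp only [B, E4, Prod.smul_mk, smul_eq_mul]
    ring
  · rw [htt]; simp only [B, E3, Prod.smul_mk, smul_eq_mul]
    field_simp
    linear_combination (-(α₁ s) * (1 + (deriv α₁ s) ^ 2)) * hch + α₁ s * hq
  · rw [htt]; simp only [B, E3, Prod.smul_mk, smul_eq_mul, bF]
    field_simp
    linear_combination (-(α₁ s) * (1 + (deriv α₁ s) ^ 2)) * hch + α₁ s * hq
  · rw [htt]; simp only [B, E4, Prod.smul_mk, smul_eq_mul]
    ring
end
end

section
/- If the profile curve is unit-speed spacelike, i.e. −(α₁′)² + (α₃′)² + (α₄′)² = 1, then at every point (t,s) the Weingarten-type vector identities ∂e₃/∂s = c(s)·e₁ + a(s)d(s)·e₄ and ∂e₃/∂t = α₁(s)b(s)·e₂ (= √(1+α₁′(s)²)·e₂) hold in ℝ⁴. -/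
noncomputable section
open Real

/-- the Weingarten-type identities
`∂e₃/∂s = c·e₁ + a d·e₄` and `∂e₃/∂t = α₁ b·e₂ (= √(1+α₁′²)·e₂)`. -/
theorem weingarten_e3
    (α₁ α₃ α₄ : ℝ → ℝ) (hα₁ : ContDiff ℝ (⊤ : ℕ∞) α₁) (hα₃ : ContDiff ℝ (⊤ : ℕ∞) α₃)
    (hα₄ : ContDiff ℝ (⊤ : ℕ∞) α₄) (hpos : ∀ s : ℝ, 0 < α₁ s)
    (hunit : ∀ s : ℝ,
      -(deriv α₁ s) ^ 2 + (deriv α₃ s) ^ 2 + (deriv α₄ s) ^ 2 = 1) :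
    ∀ t s : ℝ,
      deriv (fun u => E3 α₁ α₃ α₄ t u) s
        = cF α₁ s • E1 α₁ α₃ α₄ t s + (aF α₁ s * dF α₁ α₃ α₄ s) • E4 α₁ α₃ α₄ s ∧
      deriv (fun u => E3 α₁ α₃ α₄ u s) t = (α₁ s * bF α₁ s) • E2 t ∧
      deriv (fun u => E3 α₁ α₃ α₄ u s) t = Real.sqrt (1 + (deriv α₁ s) ^ 2) • E2 t := by
  intro t s
  have hone : (1 : WithTop ℕ∞) ≤ ((⊤:ℕ∞) : WithTop ℕ∞) := by exact_mod_cast le_top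
  have hPc : ContDiff ℝ ((⊤:ℕ∞) : WithTop ℕ∞) (deriv α₁) := (contDiff_infty_iff_deriv.mp (hα₁.of_le (by simp))).2
  have hQc : ContDiff ℝ ((⊤:ℕ∞) : WithTop ℕ∞) (deriv α₃) := (contDiff_infty_iff_deriv.mp (hα₃.of_le (by simp))).2
  have hRc : ContDiff ℝ ((⊤:ℕ∞) : WithTop ℕ∞) (deriv α₄) := (contDiff_infty_iff_deriv.mp (hα₄.of_le (by simp))).2
  set P := deriv α₁ s with hPdef
  set Q := deriv α₃ s with hQdef
  set R := deriv α₄ s with hRdef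
  set P2 := deriv (deriv α₁) s with hP2def
  set Q2 := deriv (deriv α₃) s with hQ2def
  set R2 := deriv (deriv α₄) s with hR2def
  have hsqpos : ∀ u : ℝ, (0:ℝ) < 1 + (deriv α₁ u) ^ 2 := fun u => by positivity
  have hWpos : ∀ u : ℝ, (0:ℝ) < Real.sqrt (1 + (deriv α₁ u) ^ 2) :=
    fun u => Real.sqrt_pos.mpr (hsqpos u)
  set W := Real.sqrt (1 + P ^ 2) with hWdef
  have hWne : W ≠ 0 := (hWpos s).ne'
  have hW2 : W ^ 2 = 1 + P ^ 2 := Real.sq_sqrt (hsqpos s).le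
  have hDP : HasDerivAt (deriv α₁) P2 s := ((hPc.differentiable (by simp)) s).hasDerivAt
  have hDQ : HasDerivAt (deriv α₃) Q2 s := ((hQc.differentiable (by simp)) s).hasDerivAt
  have hDR : HasDerivAt (deriv α₄) R2 s := ((hRc.differentiable (by simp)) s).hasDerivAt
  -- key identity from differentiating the unit speed condition
  have hkey : P * P2 = Q * Q2 + R * R2 := by
    have h1 : HasDerivAt
        (fun u => -(deriv α₁ u) ^ 2 + (deriv α₃ u) ^ 2 + (deriv α₄ u) ^ 2)
        (-(2 * P * P2) + 2 * Q * Q2 + 2 * R * R2) s := by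
      have h := ((hDP.pow 2).neg.add (hDQ.pow 2)).add (hDR.pow 2)
      exact h.congr_deriv (by rw [← hPdef, ← hQdef, ← hRdef]; norm_num)
    have h2 : (fun u => -(deriv α₁ u) ^ 2 + (deriv α₃ u) ^ 2 + (deriv α₄ u) ^ 2)
        = fun _ => (1:ℝ) := funext hunit
    have h3 := h1.deriv
    rw [h2, deriv_const] at h3
    linarith
  have hQR : Q ^ 2 + R ^ 2 = 1 + P ^ 2 := by have := hunit s; linarith
  -- derivative of W as a function of u
  have hinner : HasDerivAt (fun u => 1 + (deriv α₁ u) ^ 2) (2 * P * P2) s := by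
    have h := (hDP.pow 2).const_add 1
    exact h.congr_deriv (by rw [← hPdef]; norm_num)
  have hW' : HasDerivAt (fun u => Real.sqrt (1 + (deriv α₁ u) ^ 2)) (P * P2 / W) s := by
    have h := (Real.hasDerivAt_sqrt (hsqpos s).ne').comp s hinner
    exact h.congr_deriv (by rw [← hPdef, ← hWdef]; field_simp)
  -- rewrite E3 (as a function of s) componentwise in simplified form
  have hfun : (fun u => E3 α₁ α₃ α₄ t u) = fun u =>
      ((Real.sqrt (1 + (deriv α₁ u) ^ 2) * Real.cosh t,
        Real.sqrt (1 + (deriv α₁ u) ^ 2) * Real.sinh t,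
        deriv α₁ u * deriv α₃ u / Real.sqrt (1 + (deriv α₁ u) ^ 2),
        deriv α₁ u * deriv α₄ u / Real.sqrt (1 + (deriv α₁ u) ^ 2)) : ℝ × ℝ × ℝ × ℝ) := by
    funext u
    have hne := (hWpos u).ne'
    have hsq : Real.sqrt (1 + (deriv α₁ u) ^ 2) ^ 2 = 1 + (deriv α₁ u) ^ 2 :=
      Real.sq_sqrt (hsqpos u).le
    simp only [E3, Prod.smul_mk, smul_eq_mul, Prod.mk.injEq]
    refine ⟨?_, ?_, ?_, ?_⟩ <;> field_simp
    · linear_combination (-1) * hsq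
    · linear_combination (-Real.sinh t) * hsq
  -- derivatives of the four components in s
  have hc1 : HasDerivAt (fun u => Real.sqrt (1 + (deriv α₁ u) ^ 2) * Real.cosh t)
      (P * P2 / W * Real.cosh t) s := hW'.mul_const _
  have hc2 : HasDerivAt (fun u => Real.sqrt (1 + (deriv α₁ u) ^ 2) * Real.sinh t)
      (P * P2 / W * Real.sinh t) s := hW'.mul_const _
  have hc3 : HasDerivAt (fun u => deriv α₁ u * deriv α₃ u / Real.sqrt (1 + (deriv α₁ u) ^ 2))
      (((P2 * Q + P * Q2) * W - P * Q * (P * P2 / W)) / W ^ 2) s :=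
    (hDP.mul hDQ).div hW' hWne
  have hc4 : HasDerivAt (fun u => deriv α₁ u * deriv α₄ u / Real.sqrt (1 + (deriv α₁ u) ^ 2))
      (((P2 * R + P * R2) * W - P * R * (P * P2 / W)) / W ^ 2) s :=
    (hDP.mul hDR).div hW' hWne
  have hds : HasDerivAt (fun u => E3 α₁ α₃ α₄ t u)
      ((P * P2 / W * Real.cosh t, P * P2 / W * Real.sinh t,
        ((P2 * Q + P * Q2) * W - P * Q * (P * P2 / W)) / W ^ 2,
        ((P2 * R + P * R2) * W - P * R * (P * P2 / W)) / W ^ 2) : ℝ × ℝ × ℝ × ℝ) s := by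
    rw [hfun]
    exact hc1.prodMk (hc2.prodMk (hc3.prodMk hc4))
  -- derivative in t
  have hdt : HasDerivAt (fun u => E3 α₁ α₃ α₄ u s)
      ((W * Real.sinh t, W * Real.cosh t, 0, 0) : ℝ × ℝ × ℝ × ℝ) t := by
    have hft : (fun u => E3 α₁ α₃ α₄ u s) = fun u =>
        ((W * Real.cosh u, W * Real.sinh u, P * Q / W, P * R / W) : ℝ × ℝ × ℝ × ℝ) := by
      funext u
      have hsq : W ^ 2 = 1 + P ^ 2 := hW2
      simp only [E3, Prod.smul_mk, smul_eq_mul, Prod.mk.injEq, ← hWdef, ← hPdef, ← hQdef,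
        ← hRdef]
      refine ⟨?_, ?_, ?_, ?_⟩ <;> field_simp
      · linear_combination (-1) * hsq
      · linear_combination (-Real.sinh u) * hsq
    rw [hft]
    have h1 : HasDerivAt (fun u : ℝ => W * Real.cosh u) (W * Real.sinh t) t :=
      (Real.hasDerivAt_cosh t).const_mul W
    have h2 : HasDerivAt (fun u : ℝ => W * Real.sinh u) (W * Real.cosh t) t :=
      (Real.hasDerivAt_sinh t).const_mul W
    have h3 : HasDerivAt (fun _ : ℝ => P * Q / W) (0:ℝ) t := hasDerivAt_const _ _
    have h4 : HasDerivAt (fun _ : ℝ => P * R / W) (0:ℝ) t := hasDerivAt_const _ _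
    exact h1.prodMk (h2.prodMk (h3.prodMk h4))
  refine ⟨?_, ?_, ?_⟩
  · rw [hds.deriv]
    simp only [cF, aF, dF, E1, E4, ← hPdef, ← hQdef, ← hRdef, ← hP2def, ← hQ2def, ← hR2def,
      ← hWdef, Prod.smul_mk, smul_eq_mul, Prod.mk_add_mk, Prod.mk.injEq]
    refine ⟨?_, ?_, ?_, ?_⟩ <;> field_simp
    · ring
    · ring
    · linear_combination (P * Q2) * hW2 - (P * Q2) * hQR - (P * Q) * hkey
    · linear_combination (P * R2) * hW2 - (P * R2) * hQR - (P * R) * hkey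
  · rw [hdt.deriv]
    have hane : α₁ s ≠ 0 := (hpos s).ne'
    simp only [bF, E2, ← hPdef, ← hWdef, Prod.smul_mk, smul_eq_mul, Prod.mk.injEq]
    field_simp
    simp
  · rw [hdt.deriv]
    simp only [E2, ← hPdef, ← hWdef, Prod.smul_mk, smul_eq_mul, Prod.mk.injEq]
    simp
end
end

section
/- If the profile curve is unit-speed spacelike, i.e. −(α₁′)² + (α₃′)² + (α₄′)² = 1, then at every point (t,s) the Weingarten-type vector identities ∂e₄/∂s = −d(s)·e₁ + a(s)d(s)·e₃ and ∂e₄/∂t = 0 hold in ℝ⁴. -/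
noncomputable section
open Real

/-- the Weingarten-type identities
`∂e₄/∂s = −d·e₁ + a d·e₃` and `∂e₄/∂t = 0`. -/
theorem weingarten_e4
    (α₁ α₃ α₄ : ℝ → ℝ) (hα₁ : ContDiff ℝ (⊤ : ℕ∞) α₁) (hα₃ : ContDiff ℝ (⊤ : ℕ∞) α₃)
    (hα₄ : ContDiff ℝ (⊤ : ℕ∞) α₄) (hpos : ∀ s : ℝ, 0 < α₁ s)
    (hunit : ∀ s : ℝ,
      -(deriv α₁ s) ^ 2 + (deriv α₃ s) ^ 2 + (deriv α₄ s) ^ 2 = 1) :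
    ∀ t s : ℝ,
      deriv (fun u => E4 α₁ α₃ α₄ u) s
        = (-(dF α₁ α₃ α₄ s)) • E1 α₁ α₃ α₄ t s
          + (aF α₁ s * dF α₁ α₃ α₄ s) • E3 α₁ α₃ α₄ t s ∧
      deriv (fun _ : ℝ => E4 α₁ α₃ α₄ s) t = 0 := by
  intro t s
  refine ⟨?_, deriv_const _ _⟩
  have hd1 : ContDiff ℝ ((⊤:ℕ∞) : WithTop ℕ∞) (deriv α₁) := (contDiff_infty_iff_deriv.mp (hα₁.of_le (by simp))).2
  have hd3 : ContDiff ℝ ((⊤:ℕ∞) : WithTop ℕ∞) (deriv α₃) := (contDiff_infty_iff_deriv.mp (hα₃.of_le (by simp))).2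
  have hd4 : ContDiff ℝ ((⊤:ℕ∞) : WithTop ℕ∞) (deriv α₄) := (contDiff_infty_iff_deriv.mp (hα₄.of_le (by simp))).2
  have h1 : HasDerivAt (deriv α₁) (deriv (deriv α₁) s) s :=
    ((hd1.differentiable (by simp)) s).hasDerivAt
  have h3 : HasDerivAt (deriv α₃) (deriv (deriv α₃) s) s :=
    ((hd3.differentiable (by simp)) s).hasDerivAt
  have h4 : HasDerivAt (deriv α₄) (deriv (deriv α₄) s) s :=
    ((hd4.differentiable (by simp)) s).hasDerivAt
  set A1 := deriv α₁ s with hA1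
  set A3 := deriv α₃ s with hA3
  set A4 := deriv α₄ s with hA4
  set B1 := deriv (deriv α₁) s with hB1
  set B3 := deriv (deriv α₃) s with hB3
  set B4 := deriv (deriv α₄) s with hB4
  have hfpos : (0:ℝ) < 1 + A1 ^ 2 := by positivity
  set G := Real.sqrt (1 + A1 ^ 2) with hGdef
  have hGpos : 0 < G := Real.sqrt_pos.mpr hfpos
  have hGne : G ≠ 0 := ne_of_gt hGpos
  have hGsq : G ^ 2 = 1 + A1 ^ 2 := Real.sq_sqrt (le_of_lt hfpos)
  -- derivative of the unit-speed relation
  have hU : HasDerivAt (fun u => -(deriv α₁ u) ^ 2 + (deriv α₃ u) ^ 2 + (deriv α₄ u) ^ 2)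
      (-(2 * A1 * B1) + 2 * A3 * B3 + 2 * A4 * B4) s := by
    have := ((h1.fun_pow 2).fun_neg.fun_add (h3.fun_pow 2)).fun_add (h4.fun_pow 2)
    simpa [mul_comm, mul_assoc, mul_left_comm] using this
  have hU0 : -(2 * A1 * B1) + 2 * A3 * B3 + 2 * A4 * B4 = 0 := by
    have hfun : (fun u => -(deriv α₁ u) ^ 2 + (deriv α₃ u) ^ 2 + (deriv α₄ u) ^ 2)
        = fun _ : ℝ => (1:ℝ) := funext fun u => hunit u
    have hU' : HasDerivAt (fun _ : ℝ => (1:ℝ))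
        (-(2 * A1 * B1) + 2 * A3 * B3 + 2 * A4 * B4) s := hfun ▸ hU
    exact (hU'.unique (hasDerivAt_const s 1))
  have hu : -A1 ^ 2 + A3 ^ 2 + A4 ^ 2 = 1 := hunit s
  -- derivative of G
  have hg : HasDerivAt (fun u => Real.sqrt (1 + (deriv α₁ u) ^ 2))
      ((2 * A1 * B1) / (2 * G)) s := by
    have hf : HasDerivAt (fun u => 1 + (deriv α₁ u) ^ 2) (2 * A1 * B1) s := by
      have := (hasDerivAt_const s (1:ℝ)).fun_add (h1.fun_pow 2)
      simpa [mul_comm, mul_assoc, mul_left_comm] using this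
    simpa using hf.sqrt (ne_of_gt hfpos)
  -- componentwise derivatives
  have hc3 : HasDerivAt (fun u => -(deriv α₄ u) / Real.sqrt (1 + (deriv α₁ u) ^ 2))
      (((-B4) * G - (-A4) * ((2 * A1 * B1) / (2 * G))) / G ^ 2) s := h4.neg.div hg hGne
  have hc4 : HasDerivAt (fun u => deriv α₃ u / Real.sqrt (1 + (deriv α₁ u) ^ 2))
      ((B3 * G - A3 * ((2 * A1 * B1) / (2 * G))) / G ^ 2) s := h3.div hg hGne
  have hfunE : (fun u => E4 α₁ α₃ α₄ u)
      = fun u => ((0:ℝ), (0:ℝ), -(deriv α₄ u) / Real.sqrt (1 + (deriv α₁ u) ^ 2),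
          deriv α₃ u / Real.sqrt (1 + (deriv α₁ u) ^ 2)) := by
    funext u
    simp [E4, Prod.ext_iff, smul_eq_mul]
    constructor <;> ring
  have hE : HasDerivAt (fun u => E4 α₁ α₃ α₄ u)
      (((0:ℝ), (0:ℝ), ((-B4) * G - (-A4) * ((2 * A1 * B1) / (2 * G))) / G ^ 2,
        (B3 * G - A3 * ((2 * A1 * B1) / (2 * G))) / G ^ 2) : ℝ × ℝ × ℝ × ℝ) s := by
    rw [hfunE]
    exact (hasDerivAt_const s (0:ℝ)).prodMk
      ((hasDerivAt_const s (0:ℝ)).prodMk (hc3.prodMk hc4))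
  rw [hE.deriv]
  simp only [E1, E3, dF, aF, Prod.ext_iff, Prod.mk_add_mk, Prod.smul_mk, smul_eq_mul,
    Prod.fst_add, Prod.snd_add]
  rw [← hA1, ← hA3, ← hA4, ← hB3, ← hB4, ← hGdef]
  have hGsq' : A3 ^ 2 + A4 ^ 2 = G ^ 2 := by rw [hGsq]; linarith
  refine ⟨?_, ?_, ?_, ?_⟩
  · field_simp
    linear_combination ((B4 * A3 - B3 * A4) * A1 * Real.cosh t) * hGsq
  · field_simp
    linear_combination ((B4 * A3 - B3 * A4) * A1 * Real.sinh t) * hGsq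
  · field_simp
    linear_combination (-B4 - (B3 * A4 - B4 * A3) * A3) * hGsq
      + (-(A4 / 2)) * hU0 + B4 * hu
  · field_simp
    linear_combination (B3 - (B3 * A4 - B4 * A3) * A4) * hGsq
      + (A3 / 2) * hU0 + (-B3) * hu
end
end

section
/- If the profile curve is unit-speed spacelike, i.e. −(α₁′)² + (α₃′)² + (α₄′)² = 1, then at every point (t,s) the mean curvature vector of the boost-invariant surface satisfies the vector identity 2H := ∂²φ/∂s² + (1/α₁²)·∂²φ/∂t² + a(s)b(s)·e₁ = (b(s)+c(s))·e₃ + d(s)·e₄, and consequently B(2H, 2H) = d(s)² − (b(s)+c(s))². -/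
noncomputable section
open Real

/- ### Auxiliary algebraic lemmas -/

lemma hrw3' (A p p2 w X : ℝ) (hA : A ≠ 0) (hw0 : w ≠ 0) (hw2 : w ^ 2 = 1 + p ^ 2) :
    (w / A + p2 / w) * ((1 / w) * X) = ((1 + p ^ 2) + A * p2) * X / (A * (1 + p ^ 2)) := by
  rw [← hw2]; field_simp

lemma hrw4' (p w D X : ℝ) (hw0 : w ≠ 0) (hw2 : w ^ 2 = 1 + p ^ 2) :
    (D / w) * ((1 / w) * X) = D * X / (1 + p ^ 2) := by
  have h : (D / w) * ((1 / w) * X) = D * X / w ^ 2 := by field_simp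
  rw [h, hw2]

lemma hrw1' (A p w : ℝ) (hA : A ≠ 0) (hw0 : w ≠ 0) :
    p / w * (w / A) = p / A := by
  field_simp

lemma alg1 (A p p2 w ch D : ℝ) (hA : A ≠ 0) (hw0 : w ≠ 0) (h1p : (1:ℝ) + p ^ 2 ≠ 0)
    (hw2 : w ^ 2 = 1 + p ^ 2) :
    p2 * ch + (1 / A ^ 2) * (A * ch) + p / w * (w / A) * (p * ch)
      = (w / A + p2 / w) * ((1 / w) * ((1 + p ^ 2) * ch)) + D * ((1 / w) * 0) := by
  rw [hrw3' A p p2 w _ hA hw0 hw2, hrw1' A p w hA hw0]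
  field_simp
  ring

lemma alg3 (A p q r p2 q2 r2 w : ℝ) (hA : A ≠ 0) (hw0 : w ≠ 0) (h1p : (1:ℝ) + p ^ 2 ≠ 0)
    (hw2 : w ^ 2 = 1 + p ^ 2) (hqr : q ^ 2 + r ^ 2 = 1 + p ^ 2)
    (hd0 : -(p * p2) + q * q2 + r * r2 = 0) :
    q2 + (1 / A ^ 2) * 0 + p / w * (w / A) * q
      = (w / A + p2 / w) * ((1 / w) * (p * q)) + ((-q2 * r + r2 * q) / w) * ((1 / w) * (-r)) := by
  rw [hrw3' A p p2 w _ hA hw0 hw2, hrw4' p w _ _ hw0 hw2, hrw1' A p w hA hw0]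
  have key : q2 * (1 + p ^ 2) = p * p2 * q + q2 * r ^ 2 - q * r * r2 := by
    linear_combination q * hd0 - q2 * hqr
  field_simp
  linear_combination A ^ 2 * key

lemma alg4 (A p q r p2 q2 r2 w : ℝ) (hA : A ≠ 0) (hw0 : w ≠ 0) (h1p : (1:ℝ) + p ^ 2 ≠ 0)
    (hw2 : w ^ 2 = 1 + p ^ 2) (hqr : q ^ 2 + r ^ 2 = 1 + p ^ 2)
    (hd0 : -(p * p2) + q * q2 + r * r2 = 0) :
    r2 + (1 / A ^ 2) * 0 + p / w * (w / A) * r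
      = (w / A + p2 / w) * ((1 / w) * (p * r)) + ((-q2 * r + r2 * q) / w) * ((1 / w) * q) := by
  rw [hrw3' A p p2 w _ hA hw0 hw2, hrw4' p w _ _ hw0 hw2, hrw1' A p w hA hw0]
  have key : r2 * (1 + p ^ 2) = p * p2 * r + r2 * q ^ 2 - q * r * q2 := by
    linear_combination r * hd0 - r2 * hqr
  field_simp
  linear_combination A ^ 2 * key

lemma algB (p q r w ch sh Bc D : ℝ) (hw0 : w ≠ 0) (h1p : (1:ℝ) + p ^ 2 ≠ 0)
    (hw2 : w ^ 2 = 1 + p ^ 2) (hqr : q ^ 2 + r ^ 2 = 1 + p ^ 2)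
    (hcs : ch ^ 2 - sh ^ 2 = 1) :
    -((Bc * ((1 / w) * ((1 + p ^ 2) * ch))) * (Bc * ((1 / w) * ((1 + p ^ 2) * ch))))
      + (Bc * ((1 / w) * ((1 + p ^ 2) * sh))) * (Bc * ((1 / w) * ((1 + p ^ 2) * sh)))
      + (Bc * ((1 / w) * (p * q)) + D * ((1 / w) * (-r))) * (Bc * ((1 / w) * (p * q)) + D * ((1 / w) * (-r)))
      + (Bc * ((1 / w) * (p * r)) + D * ((1 / w) * q)) * (Bc * ((1 / w) * (p * r)) + D * ((1 / w) * q))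
      = D ^ 2 - Bc ^ 2 := by
  have hP : -((Bc * ((1 / w) * ((1 + p ^ 2) * ch))) * (Bc * ((1 / w) * ((1 + p ^ 2) * ch))))
      + (Bc * ((1 / w) * ((1 + p ^ 2) * sh))) * (Bc * ((1 / w) * ((1 + p ^ 2) * sh)))
      + (Bc * ((1 / w) * (p * q)) + D * ((1 / w) * (-r))) * (Bc * ((1 / w) * (p * q)) + D * ((1 / w) * (-r)))
      + (Bc * ((1 / w) * (p * r)) + D * ((1 / w) * q)) * (Bc * ((1 / w) * (p * r)) + D * ((1 / w) * q))
      = (-(Bc ^ 2 * (1 + p ^ 2) ^ 2 * ch ^ 2) + Bc ^ 2 * (1 + p ^ 2) ^ 2 * sh ^ 2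
          + (Bc * (p * q) - D * r) ^ 2 + (Bc * (p * r) + D * q) ^ 2) / w ^ 2 := by
    field_simp
    ring
  rw [hP, hw2, div_eq_iff h1p]
  linear_combination (-(Bc ^ 2 * (1 + p ^ 2) ^ 2)) * hcs + (Bc ^ 2 * p ^ 2 + D ^ 2) * hqr

/-- the mean curvature vector satisfies
`2H = ∂²φ/∂s² + (1/α₁²)·∂²φ/∂t² + a b·e₁ = (b+c)·e₃ + d·e₄` and
`B(2H,2H) = d² − (b+c)²`. -/
theorem mean_curvature_vector
    (α₁ α₃ α₄ : ℝ → ℝ) (hα₁ : ContDiff ℝ (⊤ : ℕ∞) α₁) (hα₃ : ContDiff ℝ (⊤ : ℕ∞) α₃)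
    (hα₄ : ContDiff ℝ (⊤ : ℕ∞) α₄) (hpos : ∀ s : ℝ, 0 < α₁ s)
    (hunit : ∀ s : ℝ,
      -(deriv α₁ s) ^ 2 + (deriv α₃ s) ^ 2 + (deriv α₄ s) ^ 2 = 1) :
    ∀ t s : ℝ,
      deriv (fun u => deriv (fun v => phi α₁ α₃ α₄ t v) u) s
          + (1 / (α₁ s) ^ 2) • deriv (fun u => deriv (fun v => phi α₁ α₃ α₄ v s) u) t
          + (aF α₁ s * bF α₁ s) • E1 α₁ α₃ α₄ t s
        = (bF α₁ s + cF α₁ s) • E3 α₁ α₃ α₄ t s + dF α₁ α₃ α₄ s • E4 α₁ α₃ α₄ s ∧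
      B (deriv (fun u => deriv (fun v => phi α₁ α₃ α₄ t v) u) s
          + (1 / (α₁ s) ^ 2) • deriv (fun u => deriv (fun v => phi α₁ α₃ α₄ v s) u) t
          + (aF α₁ s * bF α₁ s) • E1 α₁ α₃ α₄ t s)
        (deriv (fun u => deriv (fun v => phi α₁ α₃ α₄ t v) u) s
          + (1 / (α₁ s) ^ 2) • deriv (fun u => deriv (fun v => phi α₁ α₃ α₄ v s) u) t
          + (aF α₁ s * bF α₁ s) • E1 α₁ α₃ α₄ t s)
        = (dF α₁ α₃ α₄ s) ^ 2 - (bF α₁ s + cF α₁ s) ^ 2 := by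
  have h1d : Differentiable ℝ α₁ := hα₁.differentiable (by simp)
  have h3d : Differentiable ℝ α₃ := hα₃.differentiable (by simp)
  have h4d : Differentiable ℝ α₄ := hα₄.differentiable (by simp)
  have h1d' : Differentiable ℝ (deriv α₁) :=
    (contDiff_infty_iff_deriv.mp (hα₁.of_le (by simp))).2.differentiable
      (by simp)
  have h3d' : Differentiable ℝ (deriv α₃) :=
    (contDiff_infty_iff_deriv.mp (hα₃.of_le (by simp))).2.differentiable
      (by simp)
  have h4d' : Differentiable ℝ (deriv α₄) :=
    (contDiff_infty_iff_deriv.mp (hα₄.of_le (by simp))).2.differentiable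
      (by simp)
  intro t s
  -- second derivative in s
  have hss : deriv (fun u => deriv (fun v => phi α₁ α₃ α₄ t v) u) s
      = (deriv (deriv α₁) s * Real.cosh t, deriv (deriv α₁) s * Real.sinh t,
          deriv (deriv α₃) s, deriv (deriv α₄) s) := by
    have hds : ∀ u : ℝ, deriv (fun v => phi α₁ α₃ α₄ t v) u
        = (deriv α₁ u * Real.cosh t, deriv α₁ u * Real.sinh t, deriv α₃ u, deriv α₄ u) := by
      intro u
      have h : HasDerivAt (fun v => phi α₁ α₃ α₄ t v)
          (deriv α₁ u * Real.cosh t, deriv α₁ u * Real.sinh t, deriv α₃ u, deriv α₄ u) u :=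
        (HasDerivAt.prodMk ((h1d u).hasDerivAt.mul_const _)
          (HasDerivAt.prodMk ((h1d u).hasDerivAt.mul_const _)
            (HasDerivAt.prodMk (h3d u).hasDerivAt (h4d u).hasDerivAt)))
      exact h.deriv
    rw [funext hds]
    have h : HasDerivAt
        (fun u => (deriv α₁ u * Real.cosh t, deriv α₁ u * Real.sinh t, deriv α₃ u, deriv α₄ u))
        (deriv (deriv α₁) s * Real.cosh t, deriv (deriv α₁) s * Real.sinh t,
          deriv (deriv α₃) s, deriv (deriv α₄) s) s :=
      (HasDerivAt.prodMk ((h1d' s).hasDerivAt.mul_const _)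
        (HasDerivAt.prodMk ((h1d' s).hasDerivAt.mul_const _)
          (HasDerivAt.prodMk (h3d' s).hasDerivAt (h4d' s).hasDerivAt)))
    exact h.deriv
  -- second derivative in t
  have htt : deriv (fun u => deriv (fun v => phi α₁ α₃ α₄ v s) u) t
      = (α₁ s * Real.cosh t, α₁ s * Real.sinh t, 0, 0) := by
    have hdt : ∀ u : ℝ, deriv (fun v => phi α₁ α₃ α₄ v s) u
        = (α₁ s * Real.sinh u, α₁ s * Real.cosh u, 0, 0) := by
      intro u
      have h : HasDerivAt (fun v => phi α₁ α₃ α₄ v s)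
          (α₁ s * Real.sinh u, α₁ s * Real.cosh u, 0, 0) u :=
        HasDerivAt.prodMk ((Real.hasDerivAt_cosh u).const_mul (α₁ s))
          (HasDerivAt.prodMk ((Real.hasDerivAt_sinh u).const_mul (α₁ s))
            (HasDerivAt.prodMk (hasDerivAt_const u _) (hasDerivAt_const u _)))
      exact h.deriv
    rw [funext hdt]
    have h : HasDerivAt (fun u => ((α₁ s * Real.sinh u, α₁ s * Real.cosh u, 0, 0) : ℝ×ℝ×ℝ×ℝ))
        (α₁ s * Real.cosh t, α₁ s * Real.sinh t, 0, 0) t :=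
      HasDerivAt.prodMk ((Real.hasDerivAt_sinh t).const_mul (α₁ s))
        (HasDerivAt.prodMk ((Real.hasDerivAt_cosh t).const_mul (α₁ s))
          (HasDerivAt.prodMk (hasDerivAt_const t _) (hasDerivAt_const t _)))
    exact h.deriv
  -- differentiated unit-speed relation
  have hd0 : -(deriv α₁ s * deriv (deriv α₁) s) + deriv α₃ s * deriv (deriv α₃) s
      + deriv α₄ s * deriv (deriv α₄) s = 0 := by
    have hF : HasDerivAt (fun x => -(deriv α₁ x) ^ 2 + (deriv α₃ x) ^ 2 + (deriv α₄ x) ^ 2)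
        (-(2 * deriv α₁ s * deriv (deriv α₁) s) + 2 * deriv α₃ s * deriv (deriv α₃) s
          + 2 * deriv α₄ s * deriv (deriv α₄) s) s := by
      have e1 := ((h1d' s).hasDerivAt.pow 2).neg
      have e3 := ((h3d' s).hasDerivAt.pow 2)
      have e4 := ((h4d' s).hasDerivAt.pow 2)
      refine ((e1.add e3).add e4).congr_deriv ?_
      push_cast
      norm_num
    have hFe : (fun x => -(deriv α₁ x) ^ 2 + (deriv α₃ x) ^ 2 + (deriv α₄ x) ^ 2)
        = fun _ : ℝ => (1 : ℝ) := funext hunit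
    have h0 : deriv (fun x => -(deriv α₁ x) ^ 2 + (deriv α₃ x) ^ 2 + (deriv α₄ x) ^ 2) s = 0 := by
      rw [hFe]; simp
    have hd := hF.deriv
    rw [h0] at hd
    linarith
  -- nondegeneracy facts
  have hA : α₁ s ≠ 0 := (hpos s).ne'
  have h1p : (0:ℝ) < 1 + (deriv α₁ s) ^ 2 := by positivity
  have hw0 : Real.sqrt (1 + (deriv α₁ s) ^ 2) ≠ 0 := (Real.sqrt_pos.mpr h1p).ne'
  have hw2 : (Real.sqrt (1 + (deriv α₁ s) ^ 2)) ^ 2 = 1 + (deriv α₁ s) ^ 2 :=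
    Real.sq_sqrt h1p.le
  have hqr : (deriv α₃ s) ^ 2 + (deriv α₄ s) ^ 2 = 1 + (deriv α₁ s) ^ 2 := by
    linarith [hunit s]
  -- the vector identity
  have hveq : deriv (fun u => deriv (fun v => phi α₁ α₃ α₄ t v) u) s
      + (1 / (α₁ s) ^ 2) • deriv (fun u => deriv (fun v => phi α₁ α₃ α₄ v s) u) t
      + (aF α₁ s * bF α₁ s) • E1 α₁ α₃ α₄ t s
      = (bF α₁ s + cF α₁ s) • E3 α₁ α₃ α₄ t s + dF α₁ α₃ α₄ s • E4 α₁ α₃ α₄ s := by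
    rw [hss, htt]
    simp only [E1, E3, E4, aF, bF, cF, dF, Prod.smul_mk, smul_eq_mul,
      Prod.mk_add_mk, Prod.mk.injEq]
    refine ⟨?_, ?_, ?_, ?_⟩
    · linear_combination alg1 (α₁ s) (deriv α₁ s) (deriv (deriv α₁) s)
        (Real.sqrt (1 + (deriv α₁ s) ^ 2)) (Real.cosh t)
        ((-(deriv (deriv α₃) s) * deriv α₄ s + deriv (deriv α₄) s * deriv α₃ s) /
          Real.sqrt (1 + (deriv α₁ s) ^ 2)) hA hw0 h1p.ne' hw2
    · linear_combination alg1 (α₁ s) (deriv α₁ s) (deriv (deriv α₁) s)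
        (Real.sqrt (1 + (deriv α₁ s) ^ 2)) (Real.sinh t)
        ((-(deriv (deriv α₃) s) * deriv α₄ s + deriv (deriv α₄) s * deriv α₃ s) /
          Real.sqrt (1 + (deriv α₁ s) ^ 2)) hA hw0 h1p.ne' hw2
    · linear_combination alg3 (α₁ s) (deriv α₁ s) (deriv α₃ s) (deriv α₄ s)
        (deriv (deriv α₁) s) (deriv (deriv α₃) s) (deriv (deriv α₄) s)
        (Real.sqrt (1 + (deriv α₁ s) ^ 2)) hA hw0 h1p.ne' hw2 hqr hd0
    · linear_combination alg4 (α₁ s) (deriv α₁ s) (deriv α₃ s) (deriv α₄ s)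
        (deriv (deriv α₁) s) (deriv (deriv α₃) s) (deriv (deriv α₄) s)
        (Real.sqrt (1 + (deriv α₁ s) ^ 2)) hA hw0 h1p.ne' hw2 hqr hd0
  refine ⟨hveq, ?_⟩
  rw [hveq]
  simp only [B, E3, E4, Prod.smul_mk, smul_eq_mul, Prod.mk_add_mk]
  linear_combination algB (deriv α₁ s) (deriv α₃ s) (deriv α₄ s)
    (Real.sqrt (1 + (deriv α₁ s) ^ 2)) (Real.cosh t) (Real.sinh t)
    (bF α₁ s + cF α₁ s) (dF α₁ α₃ α₄ s) hw0 h1p.ne' hw2 hqr (Real.cosh_sq_sub_sinh_sq t)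
end
end

section
/- If the profile curve is unit-speed spacelike, i.e. −(α₁′)² + (α₃′)² + (α₄′)² = 1, then the Gaussian curvature of the boost-invariant surface, computed by the Gauss equation K = ε₃(h₁₁³h₂₂³ − (h₁₂³)²) + ε₄(h₁₁⁴h₂₂⁴ − (h₁₂⁴)²) with ε₃ = −1, ε₄ = 1, h₁₁³ = −c(s), h₁₂³ = 0, h₂₂³ = −b(s), h₁₁⁴ = d(s), h₁₂⁴ = h₂₂⁴ = 0, equals K = −b(s)c(s) = −α₁″(s)/α₁(s). In particular K ≡ 0 on an interval if and only if α₁″ ≡ 0 there, i.e. α₁ is an affine function of s. -/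
noncomputable section
open Real

lemma const_of_deriv_zero_on {f : ℝ → ℝ} (hf : Differentiable ℝ f) {I : Set ℝ}
    (hIo : IsOpen I) (hIc : Convex ℝ I) (hd : ∀ s ∈ I, deriv f s = 0)
    {x y : ℝ} (hx : x ∈ I) (hy : y ∈ I) : f x = f y := by
  refine hIc.is_const_of_fderivWithin_eq_zero hf.differentiableOn (fun z hz => ?_) hx hy
  rw [fderivWithin_of_isOpen hIo hz]
  ext u
  simp [fderiv_eq_smul_deriv, hd z hz]

/-- the Gaussian curvature computed by the Gauss equation equals
`K = −b c = −α₁″/α₁`; moreover `K ≡ 0` on an interval iff `α₁″ ≡ 0` there, i.e.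
iff `α₁` is affine there. -/
theorem gaussian_curvature
    (α₁ α₃ α₄ : ℝ → ℝ) (hα₁ : ContDiff ℝ (⊤ : ℕ∞) α₁) (hα₃ : ContDiff ℝ (⊤ : ℕ∞) α₃)
    (hα₄ : ContDiff ℝ (⊤ : ℕ∞) α₄) (hpos : ∀ s : ℝ, 0 < α₁ s)
    (hunit : ∀ s : ℝ,
      -(deriv α₁ s) ^ 2 + (deriv α₃ s) ^ 2 + (deriv α₄ s) ^ 2 = 1)
    (I : Set ℝ) (hIo : IsOpen I) (hIc : Convex ℝ I) (hne : I.Nonempty) :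
    (∀ s : ℝ,
      (-1 : ℝ) * ((-(cF α₁ s)) * (-(bF α₁ s)) - 0 * 0)
        + 1 * (dF α₁ α₃ α₄ s * 0 - 0 * 0)
      = -(bF α₁ s) * cF α₁ s) ∧
    (∀ s : ℝ, -(bF α₁ s) * cF α₁ s = -(deriv (deriv α₁) s) / α₁ s) ∧
    ((∀ s ∈ I, -(bF α₁ s) * cF α₁ s = 0) ↔ (∀ s ∈ I, deriv (deriv α₁) s = 0)) ∧
    ((∀ s ∈ I, deriv (deriv α₁) s = 0) ↔ ∃ m k : ℝ, ∀ s ∈ I, α₁ s = m * s + k) := by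
  have hsq : ∀ s : ℝ, Real.sqrt (1 + (deriv α₁ s) ^ 2) ≠ 0 := fun s =>
    ne_of_gt (Real.sqrt_pos.mpr (by positivity))
  have h2 : ∀ s : ℝ, -(bF α₁ s) * cF α₁ s = -(deriv (deriv α₁) s) / α₁ s := by
    intro s
    have hα : α₁ s ≠ 0 := ne_of_gt (hpos s)
    unfold bF cF
    field_simp
  refine ⟨fun s => by ring, h2, ?_, ?_⟩
  · constructor
    · intro h s hs
      have := (h s hs).symm.trans (h2 s)
      have hα : α₁ s ≠ 0 := ne_of_gt (hpos s)
      field_simp at this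
      linarith
    · intro h s hs
      rw [h2 s, h s hs]
      simp
  · constructor
    · intro h
      obtain ⟨s₀, hs₀⟩ := hne
      have hdiff : Differentiable ℝ α₁ := hα₁.differentiable (by simp)
      have hdiff' : Differentiable ℝ (deriv α₁) :=
        ((contDiff_infty_iff_deriv.mp (hα₁.of_le (by simp))).2).differentiable (by simp)
      refine ⟨deriv α₁ s₀, α₁ s₀ - deriv α₁ s₀ * s₀, fun s hs => ?_⟩
      have hm : ∀ x ∈ I, deriv α₁ x = deriv α₁ s₀ := fun x hx =>
        const_of_deriv_zero_on hdiff' hIo hIc h hx hs₀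
      have hg : Differentiable ℝ (fun x => α₁ x - deriv α₁ s₀ * x) := by
        exact hdiff.sub ((differentiable_id.const_mul _))
      have hgd : ∀ x ∈ I, deriv (fun x => α₁ x - deriv α₁ s₀ * x) x = 0 := by
        intro x hx
        rw [deriv_fun_sub (hdiff x) (by fun_prop)]
        have : deriv (fun y => deriv α₁ s₀ * y) x = deriv α₁ s₀ := by
          simpa using ((hasDerivAt_id x).const_mul (deriv α₁ s₀)).deriv
        simp only [hm x hx, this]
        ring
      have := const_of_deriv_zero_on hg hIo hIc hgd hs hs₀
      linarith
    · rintro ⟨m, k, hmk⟩ s hs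
      have h1 : Set.EqOn α₁ (fun x => m * x + k) I := hmk
      have hA : ∀ x : ℝ, deriv (fun x => m * x + k) x = m := fun x => by
        simpa using (((hasDerivAt_id x).const_mul m).add_const k).deriv
      have h2' : Set.EqOn (deriv α₁) (fun _ => m) I := by
        intro x hx
        rw [Filter.EventuallyEq.deriv_eq (h1.eventuallyEq_of_mem (hIo.mem_nhds hx))]
        exact hA x
      rw [Filter.EventuallyEq.deriv_eq (h2'.eventuallyEq_of_mem (hIo.mem_nhds hs))]
      simp
end
end

section
/- (Affine case of Theorem 1.) Let b₁ ≠ 0, b₂ be constants and I an interval on which α₁(s) = b₁s + b₂ > 0. Suppose α₃, α₄ : I → ℝ are smooth with α₃′² + α₄′² = 1 + b₁² (unit-speed spacelike profile curve), and the function d(s) = (−α₃″α₄′ + α₄″α₃′)/√(1+b₁²) satisfies d′(s) + (b₁/(b₁s+b₂))·d(s) = 0 on I. Then there exist constants b₃ and θ₀ such that, with b = b₃/(b₁·√(1+b₁²)), one has α₃′(s) = √(1+b₁²)·cos(b·ln|b₁s + b₂| + θ₀) and α₄′(s) = √(1+b₁²)·sin(b·ln|b₁s + b₂| + θ₀) for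 all s ∈ I. -/
noncomputable section
open Real

lemma subsingleton_of_convex_empty_interior {I : Set ℝ} (hI : Convex ℝ I)
    (h : ¬ (interior I).Nonempty) : ∀ x ∈ I, ∀ y ∈ I, x = y := by
  intro x hx y hy
  by_contra hne
  rcases lt_or_gt_of_ne hne with hlt | hlt
  · have hsub : Set.Ioo x y ⊆ I := fun z hz =>
      hI.ordConnected.out hx hy ⟨le_of_lt hz.1, le_of_lt hz.2⟩
    exact h ⟨(x + y)/2, (isOpen_Ioo.subset_interior_iff.mpr hsub)
      ⟨by linarith, by linarith⟩⟩
  · have hsub : Set.Ioo y x ⊆ I := fun z hz =>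
      hI.ordConnected.out hy hx ⟨le_of_lt hz.1, le_of_lt hz.2⟩
    exact h ⟨(x + y)/2, (isOpen_Ioo.subset_interior_iff.mpr hsub)
      ⟨by linarith, by linarith⟩⟩

-- angle extraction
lemma exists_angle {x y r : ℝ} (hr : 0 < r) (h : x ^ 2 + y ^ 2 = r ^ 2) :
    ∃ θ : ℝ, x = r * Real.cos θ ∧ y = r * Real.sin θ := by
  have hz : (⟨x, y⟩ : ℂ) ≠ 0 := by
    intro h0
    have hx : x = 0 := congrArg Complex.re h0
    have hy : y = 0 := congrArg Complex.im h0
    nlinarith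
  have habs : ‖(⟨x, y⟩ : ℂ)‖ = r := by
    rw [Complex.norm_def, Complex.normSq_mk, show x * x + y * y = r ^ 2 by nlinarith]
    exact Real.sqrt_sq hr.le
  refine ⟨Complex.arg ⟨x, y⟩, ?_, ?_⟩
  · rw [Complex.cos_arg hz, habs]; field_simp
  · rw [Complex.sin_arg, habs]; field_simp


/-- affine case of Theorem 1: for `α₁(s) = b₁s + b₂ > 0` on `I`
with unit-speed spacelike profile curve and `d′ + (b₁/(b₁s+b₂))·d = 0`, there
are constants `b₃, θ₀` such that, with `b = b₃/(b₁√(1+b₁²))`,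
`α₃′ = √(1+b₁²) cos(b ln|b₁s+b₂| + θ₀)` and `α₄′ = √(1+b₁²) sin(b ln|b₁s+b₂| + θ₀)`. -/
theorem affine_case_profile_curve
    (I : Set ℝ) (hI : Convex ℝ I) (b₁ b₂ : ℝ) (hb₁ : b₁ ≠ 0)
    (hpos : ∀ s ∈ I, 0 < b₁ * s + b₂)
    (α₃ α₄ : ℝ → ℝ) (hα₃ : ContDiff ℝ (⊤ : ℕ∞) α₃) (hα₄ : ContDiff ℝ (⊤ : ℕ∞) α₄)
    (hnorm : ∀ s ∈ I, (deriv α₃ s) ^ 2 + (deriv α₄ s) ^ 2 = 1 + b₁ ^ 2)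
    (hode : ∀ s ∈ I,
      deriv (fun u => (-(deriv (deriv α₃) u) * deriv α₄ u
          + deriv (deriv α₄) u * deriv α₃ u) / Real.sqrt (1 + b₁ ^ 2)) s
        + (b₁ / (b₁ * s + b₂)) *
          ((-(deriv (deriv α₃) s) * deriv α₄ s
            + deriv (deriv α₄) s * deriv α₃ s) / Real.sqrt (1 + b₁ ^ 2)) = 0) :
    ∃ b₃ θ₀ : ℝ,
      ∀ s ∈ I,
        deriv α₃ s = Real.sqrt (1 + b₁ ^ 2) *
          Real.cos ((b₃ / (b₁ * Real.sqrt (1 + b₁ ^ 2))) * Real.log |b₁ * s + b₂| + θ₀) ∧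
        deriv α₄ s = Real.sqrt (1 + b₁ ^ 2) *
          Real.sin ((b₃ / (b₁ * Real.sqrt (1 + b₁ ^ 2))) * Real.log |b₁ * s + b₂| + θ₀) := by
  have hr2 : Real.sqrt (1 + b₁ ^ 2) ^ 2 = 1 + b₁ ^ 2 := Real.sq_sqrt (by positivity)
  have hr0 : 0 < Real.sqrt (1 + b₁ ^ 2) := Real.sqrt_pos.mpr (by positivity)
  set r := Real.sqrt (1 + b₁ ^ 2) with hrdef
  -- differentiability facts
  have h3i : ContDiff ℝ (⊤ : ℕ∞) α₃ := hα₃.of_le (by simp)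
  have h4i : ContDiff ℝ (⊤ : ℕ∞) α₄ := hα₄.of_le (by simp)
  have hp : ContDiff ℝ (⊤ : ℕ∞) (deriv α₃) := (contDiff_infty_iff_deriv.mp h3i).2
  have hq : ContDiff ℝ (⊤ : ℕ∞) (deriv α₄) := (contDiff_infty_iff_deriv.mp h4i).2
  have hp' : ContDiff ℝ (⊤ : ℕ∞) (deriv (deriv α₃)) := (contDiff_infty_iff_deriv.mp hp).2
  have hq' : ContDiff ℝ (⊤ : ℕ∞) (deriv (deriv α₄)) := (contDiff_infty_iff_deriv.mp hq).2
  have hpd : Differentiable ℝ (deriv α₃) := hp.differentiable (by simp)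
  have hqd : Differentiable ℝ (deriv α₄) := hq.differentiable (by simp)
  have hpd' : Differentiable ℝ (deriv (deriv α₃)) := hp'.differentiable (by simp)
  have hqd' : Differentiable ℝ (deriv (deriv α₄)) := hq'.differentiable (by simp)
  set D : ℝ → ℝ := fun u => (-(deriv (deriv α₃) u) * deriv α₄ u
      + deriv (deriv α₄) u * deriv α₃ u) / r with hDdef
  have hDdiff : Differentiable ℝ D :=
    (((hpd'.neg.mul hqd).add (hqd'.mul hpd)).div_const r)
  by_cases hint : (interior I).Nonempty
  · -- main case
    have hud : UniqueDiffOn ℝ I := uniqueDiffOn_convex hI hint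
    obtain ⟨s₀, hs₀i⟩ := hint
    have hs₀ : s₀ ∈ I := interior_subset hs₀i
    -- Fact 1 : p p' + q q' = 0 on I
    have fact1 : ∀ s ∈ I,
        deriv α₃ s * deriv (deriv α₃) s + deriv α₄ s * deriv (deriv α₄) s = 0 := by
      intro s hs
      have hF : HasDerivAt (fun u => deriv α₃ u ^ 2 + deriv α₄ u ^ 2)
          (2 * deriv α₃ s * deriv (deriv α₃) s + 2 * deriv α₄ s * deriv (deriv α₄) s) s := by
        have h3 := (hpd s).hasDerivAt
        have h4 := (hqd s).hasDerivAt
        have := (h3.pow 2).add (h4.pow 2)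
        exact this.congr_deriv (by norm_num <;> ring)
      have hW0 : HasDerivWithinAt (fun u => deriv α₃ u ^ 2 + deriv α₄ u ^ 2) 0 I s :=
        (hasDerivWithinAt_const s I (1 + b₁ ^ 2)).congr (fun y hy => hnorm y hy) (hnorm s hs)
      have heq : (2 * deriv α₃ s * deriv (deriv α₃) s
          + 2 * deriv α₄ s * deriv (deriv α₄) s) = 0 := by
        rw [← hF.hasDerivWithinAt.derivWithin (hud s hs), ← hW0.derivWithin (hud s hs)]
      linarith
    -- M = (b₁s+b₂) D is constant
    set M : ℝ → ℝ := fun u => (b₁ * u + b₂) * D u with hMdef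
    have hM0 : ∀ s ∈ I, HasDerivWithinAt M 0 I s := by
      intro s hs
      have hsne : b₁ * s + b₂ ≠ 0 := (hpos s hs).ne'
      have hlin : HasDerivAt (fun u => b₁ * u + b₂) b₁ s := by
        simpa using ((hasDerivAt_id s).const_mul b₁).add_const b₂
      have hDs : HasDerivAt D (deriv D s) s := (hDdiff s).hasDerivAt
      have hMs : HasDerivAt M (b₁ * D s + (b₁ * s + b₂) * deriv D s) s := by
        exact hlin.mul hDs
      have hode' := hode s hs
      have key : b₁ * D s + (b₁ * s + b₂) * deriv D s = 0 := by
        have hds : deriv D s = -(b₁ / (b₁ * s + b₂)) * D s := by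
          have : deriv D s + (b₁ / (b₁ * s + b₂)) * D s = 0 := hode'
          linarith
        rw [hds]; field_simp; ring
      exact (key ▸ hMs).hasDerivWithinAt
    have hMconst : ∀ s ∈ I, M s = M s₀ := by
      intro s hs
      have := Convex.norm_image_sub_le_of_norm_hasDerivWithin_le (f' := fun _ => (0 : ℝ))
        (C := 0) (fun x hx => hM0 x hx) (fun x _ => by simp) hI hs₀ hs
      simp only [zero_mul, norm_le_zero_iff, sub_eq_zero] at this
      exact this
    set b₃ := M s₀ with hb₃def
    have hDval : ∀ s ∈ I, D s = b₃ / (b₁ * s + b₂) := by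
      intro s hs
      have hsne : b₁ * s + b₂ ≠ 0 := (hpos s hs).ne'
      have h1 : (b₁ * s + b₂) * D s = b₃ := hMconst s hs
      rw [eq_div_iff hsne]
      linear_combination h1
    -- Fact 3 : p' = -q D / r, q' = p D / r
    have fact3 : ∀ s ∈ I,
        deriv (deriv α₃) s = -(deriv α₄ s) * D s / r ∧
        deriv (deriv α₄) s = deriv α₃ s * D s / r := by
      intro s hs
      have h1 := fact1 s hs
      have h2 : -(deriv (deriv α₃) s) * deriv α₄ s + deriv (deriv α₄) s * deriv α₃ s
          = r * D s := by
        rw [hDdef]; field_simp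
      have h3 : deriv α₃ s ^ 2 + deriv α₄ s ^ 2 = r ^ 2 := by rw [hr2]; exact hnorm s hs
      constructor
      · rw [eq_div_iff hr0.ne']
        have expand : deriv (deriv α₃) s * (deriv α₃ s ^ 2 + deriv α₄ s ^ 2)
            = deriv α₃ s * (deriv α₃ s * deriv (deriv α₃) s + deriv α₄ s * deriv (deriv α₄) s)
              - deriv α₄ s * (-(deriv (deriv α₃) s) * deriv α₄ s
                + deriv (deriv α₄) s * deriv α₃ s) := by ring
        rw [h3, h1, h2] at expand
        have : deriv (deriv α₃) s * r ^ 2 = -(deriv α₄ s) * (r * D s) := by linarith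
        have hrne := hr0.ne'
        field_simp at this ⊢
        nlinarith [this]
      · rw [eq_div_iff hr0.ne']
        have expand : deriv (deriv α₄) s * (deriv α₃ s ^ 2 + deriv α₄ s ^ 2)
            = deriv α₄ s * (deriv α₃ s * deriv (deriv α₃) s + deriv α₄ s * deriv (deriv α₄) s)
              + deriv α₃ s * (-(deriv (deriv α₃) s) * deriv α₄ s
                + deriv (deriv α₄) s * deriv α₃ s) := by ring
        rw [h3, h1, h2] at expand
        have : deriv (deriv α₄) s * r ^ 2 = deriv α₃ s * (r * D s) := by linarith
        have hrne := hr0.ne'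
        field_simp at this ⊢
        nlinarith [this]
    -- the angle function
    set g : ℝ → ℝ := fun u => (b₃ / (b₁ * r)) * Real.log (b₁ * u + b₂) with hgdef
    have hg : ∀ s ∈ I, HasDerivAt g (D s / r) s := by
      intro s hs
      have hsne : b₁ * s + b₂ ≠ 0 := (hpos s hs).ne'
      have hlin : HasDerivAt (fun u => b₁ * u + b₂) b₁ s := by
        simpa using ((hasDerivAt_id s).const_mul b₁).add_const b₂
      have hlog : HasDerivAt (fun u => Real.log (b₁ * u + b₂)) (b₁ / (b₁ * s + b₂)) s := by
        have := (Real.hasDerivAt_log hsne).comp s hlin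
        exact this.congr_deriv (by rw [div_eq_inv_mul])
      have := hlog.const_mul (b₃ / (b₁ * r))
      refine this.congr_deriv ?_
      rw [hDval s hs]
      field_simp
    -- rotated functions h, k
    set h : ℝ → ℝ := fun u => deriv α₃ u * Real.cos (g u) + deriv α₄ u * Real.sin (g u)
      with hhdef
    set k : ℝ → ℝ := fun u => -(deriv α₃ u) * Real.sin (g u) + deriv α₄ u * Real.cos (g u)
      with hkdef
    have hhk0 : ∀ s ∈ I, HasDerivWithinAt h 0 I s ∧ HasDerivWithinAt k 0 I s := by
      intro s hs
      have hgs := hg s hs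
      have hcos : HasDerivAt (fun u => Real.cos (g u)) (-(Real.sin (g s)) * (D s / r)) s :=
        (Real.hasDerivAt_cos (g s)).comp s hgs
      have hsin : HasDerivAt (fun u => Real.sin (g u)) (Real.cos (g s) * (D s / r)) s :=
        (Real.hasDerivAt_sin (g s)).comp s hgs
      have h3 := (hpd s).hasDerivAt
      have h4 := (hqd s).hasDerivAt
      obtain ⟨f3a, f3b⟩ := fact3 s hs
      constructor
      · have hh : HasDerivAt h
            (deriv (deriv α₃) s * Real.cos (g s) + deriv α₃ s * (-(Real.sin (g s)) * (D s / r))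
              + (deriv (deriv α₄) s * Real.sin (g s)
                + deriv α₄ s * (Real.cos (g s) * (D s / r)))) s :=
          (h3.mul hcos).add (h4.mul hsin)
        have hz : (deriv (deriv α₃) s * Real.cos (g s)
            + deriv α₃ s * (-(Real.sin (g s)) * (D s / r))
            + (deriv (deriv α₄) s * Real.sin (g s)
              + deriv α₄ s * (Real.cos (g s) * (D s / r)))) = 0 := by
          rw [f3a, f3b]; field_simp; ring
        exact (hz ▸ hh).hasDerivWithinAt
      · have hk : HasDerivAt k
            (-(deriv (deriv α₃) s) * Real.sin (g s)
              + -(deriv α₃ s) * (Real.cos (g s) * (D s / r))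
              + (deriv (deriv α₄) s * Real.cos (g s)
                + deriv α₄ s * (-(Real.sin (g s)) * (D s / r)))) s :=
          ((h3.neg).mul hsin).add (h4.mul hcos)
        have hz : (-(deriv (deriv α₃) s) * Real.sin (g s)
            + -(deriv α₃ s) * (Real.cos (g s) * (D s / r))
            + (deriv (deriv α₄) s * Real.cos (g s)
              + deriv α₄ s * (-(Real.sin (g s)) * (D s / r)))) = 0 := by
          rw [f3a, f3b]; field_simp; ring
        exact (hz ▸ hk).hasDerivWithinAt
    have hhconst : ∀ s ∈ I, h s = h s₀ ∧ k s = k s₀ := by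
      intro s hs
      constructor
      · have := Convex.norm_image_sub_le_of_norm_hasDerivWithin_le (f' := fun _ => (0 : ℝ))
          (C := 0) (fun x hx => (hhk0 x hx).1) (fun x _ => by simp) hI hs₀ hs
        simp only [zero_mul, norm_le_zero_iff, sub_eq_zero] at this
        exact this
      · have := Convex.norm_image_sub_le_of_norm_hasDerivWithin_le (f' := fun _ => (0 : ℝ))
          (C := 0) (fun x hx => (hhk0 x hx).2) (fun x _ => by simp) hI hs₀ hs
        simp only [zero_mul, norm_le_zero_iff, sub_eq_zero] at this
        exact this
    -- extract the angle
    have hnorm0 : h s₀ ^ 2 + k s₀ ^ 2 = r ^ 2 := by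
      have hpq : deriv α₃ s₀ ^ 2 + deriv α₄ s₀ ^ 2 = r ^ 2 := by rw [hr2]; exact hnorm s₀ hs₀
      have trig := Real.sin_sq_add_cos_sq (g s₀)
      rw [hhdef, hkdef]
      simp only
      linear_combination (Real.cos (g s₀) ^ 2 + Real.sin (g s₀) ^ 2) * hpq + r ^ 2 * trig
    obtain ⟨θ₀, hcosθ, hsinθ⟩ := exists_angle hr0 hnorm0
    refine ⟨b₃, θ₀, ?_⟩
    intro s hs
    have habs : |b₁ * s + b₂| = b₁ * s + b₂ := abs_of_pos (hpos s hs)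
    have trig := Real.sin_sq_add_cos_sq (g s)
    obtain ⟨hc1, hc2⟩ := hhconst s hs
    have e1 : h s * Real.cos (g s) - k s * Real.sin (g s) = deriv α₃ s := by
      rw [hhdef, hkdef]; simp only; linear_combination deriv α₃ s * trig
    have e2 : h s * Real.sin (g s) + k s * Real.cos (g s) = deriv α₄ s := by
      rw [hhdef, hkdef]; simp only; linear_combination deriv α₄ s * trig
    have hgs : (b₃ / (b₁ * r)) * Real.log |b₁ * s + b₂| = g s := by
      rw [habs, hgdef]
    constructor
    · rw [hgs, Real.cos_add, ← e1, hc1, hc2, hcosθ, hsinθ]; ring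
    · rw [hgs, Real.sin_add, ← e2, hc1, hc2, hcosθ, hsinθ]; ring
  · -- degenerate case: I is a subsingleton
    have hsub := subsingleton_of_convex_empty_interior hI hint
    by_cases hne : I.Nonempty
    · obtain ⟨s₀, hs₀⟩ := hne
      have hpq : deriv α₃ s₀ ^ 2 + deriv α₄ s₀ ^ 2 = r ^ 2 := by rw [hr2]; exact hnorm s₀ hs₀
      obtain ⟨θ₀, hcosθ, hsinθ⟩ := exists_angle hr0 hpq
      refine ⟨0, θ₀, ?_⟩
      intro s hs
      rw [hsub s hs s₀ hs₀]
      simp only [zero_div, zero_mul, zero_add]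
      exact ⟨hcosθ, hsinθ⟩
    · exact ⟨0, 0, fun s hs => absurd ⟨s, hs⟩ hne⟩
end
end

section
/- (Reduction in Theorem 4.) Let α₁ : I → ℝ be smooth with α₁(s) > 0 on an interval I, and set a(s) = α₁′/√(1+α₁′²), b(s) = √(1+α₁′²)/α₁, c(s) = α₁″/√(1+α₁′²). Then the identity b′(s) + c′(s) + a(s)·(b(s)+c(s))² = (1 + α₁′(s)² + α₁(s)α₁″(s))′ / (α₁(s)·√(1+α₁′(s)²)) · 1 holds in the sense that b′ + c′ + a(b+c)² = 0 on I if and only if the function P(s) = 1 + α₁′(s)² + α₁(s)α₁″(s) is constant on I. -/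
noncomputable section
open Real

/-- reduction in Theorem 4: for a smooth positive `α₁`,
`b′ + c′ + a(b+c)² = 0` on an open interval `I` iff
`P(s) = 1 + α₁′² + α₁α₁″` is constant on `I`. -/
theorem reduction_to_constant_P
    (I : Set ℝ) (hIo : IsOpen I) (hIc : Convex ℝ I) (hne : I.Nonempty)
    (α₁ : ℝ → ℝ) (hα₁ : ContDiff ℝ (⊤ : ℕ∞) α₁) (hpos : ∀ s ∈ I, 0 < α₁ s) :
    (∀ s ∈ I,
        deriv (bF α₁) s + deriv (cF α₁) s + aF α₁ s * (bF α₁ s + cF α₁ s) ^ 2 = 0)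
      ↔ ∃ k : ℝ, ∀ s ∈ I,
          1 + (deriv α₁ s) ^ 2 + α₁ s * deriv (deriv α₁) s = k := by
  -- smoothness facts
  have h0 : ContDiff ℝ ((⊤ : ℕ∞) : WithTop ℕ∞) α₁ := hα₁.of_le (by simp)
  have h1 : ContDiff ℝ ((⊤ : ℕ∞) : WithTop ℕ∞) (deriv α₁) := (contDiff_infty_iff_deriv.mp h0).2
  have h2 : ContDiff ℝ ((⊤ : ℕ∞) : WithTop ℕ∞) (deriv (deriv α₁)) := (contDiff_infty_iff_deriv.mp h1).2
  set f' := deriv α₁ with hf'def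
  set f'' := deriv (deriv α₁) with hf''def
  set f''' := deriv (deriv (deriv α₁)) with hf'''def
  set P : ℝ → ℝ := fun s => 1 + (f' s) ^ 2 + α₁ s * f'' s with hPdef
  set Q : ℝ → ℝ := fun s => Real.sqrt (1 + (f' s) ^ 2) with hQdef
  have hQpos : ∀ s, 0 < Q s := fun s =>
    Real.sqrt_pos.mpr (by positivity)
  have hQsq : ∀ s, Q s ^ 2 = 1 + (f' s) ^ 2 := fun s =>
    Real.sq_sqrt (by positivity)
  -- hasDerivAt facts
  have hf : ∀ s, HasDerivAt α₁ (f' s) s := fun s => (h0.differentiable (by simp) s).hasDerivAt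
  have hf2 : ∀ s, HasDerivAt f' (f'' s) s := fun s => (h1.differentiable (by simp) s).hasDerivAt
  have hf3 : ∀ s, HasDerivAt f'' (f''' s) s := fun s => (h2.differentiable (by simp) s).hasDerivAt
  have hQ : ∀ s, HasDerivAt Q (2 * f' s ^ 1 * f'' s / (2 * Q s)) s := by
    intro s
    exact (((hf2 s).pow 2).const_add 1).sqrt (ne_of_gt (by show (0:ℝ) < 1 + f' s ^ 2; positivity))
  have hPderiv : ∀ s, deriv P s = 3 * f' s * f'' s + α₁ s * f''' s := by
    intro s
    have : HasDerivAt P (0 + 2 * f' s ^ 1 * f'' s + (f' s * f'' s + α₁ s * f''' s)) s :=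
      ((hasDerivAt_const s (1:ℝ)).add ((hf2 s).pow 2)).add ((hf s).mul (hf3 s))
    rw [this.deriv]; ring
  -- the key identity at points where α₁ s ≠ 0
  have key : ∀ s, α₁ s ≠ 0 →
      deriv (bF α₁) s + deriv (cF α₁) s + aF α₁ s * (bF α₁ s + cF α₁ s) ^ 2
        = deriv P s / (α₁ s * Q s) := by
    intro s hs
    have hQne : Q s ≠ 0 := (hQpos s).ne'
    have hb : HasDerivAt (bF α₁)
        ((2 * f' s ^ 1 * f'' s / (2 * Q s) * α₁ s - Q s * f' s) / α₁ s ^ 2) s :=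
      (hQ s).div (hf s) hs
    have hc : HasDerivAt (cF α₁)
        ((f''' s * Q s - f'' s * (2 * f' s ^ 1 * f'' s / (2 * Q s))) / Q s ^ 2) s :=
      (hf3 s).div (hQ s) hQne
    rw [hb.deriv, hc.deriv, hPderiv s]
    show _ + _ + f' s / Q s * (Q s / α₁ s + f'' s / Q s) ^ 2 = _
    have hq := hQsq s
    field_simp
    ring_nf
  constructor
  · -- forward: P has zero derivative on I, hence constant
    intro h
    obtain ⟨s₀, hs₀⟩ := hne
    refine ⟨P s₀, fun s hs => ?_⟩
    have hder0 : ∀ x ∈ I, deriv P x = 0 := by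
      intro x hx
      have hxne : α₁ x ≠ 0 := (hpos x hx).ne'
      have := (key x hxne).symm.trans (h x hx)
      have hQne : Q x ≠ 0 := (hQpos x).ne'
      field_simp at this
      simpa using this
    have hPdiff : DifferentiableOn ℝ P I := by
      intro x hx
      exact (((differentiable_const _).add ((h1.differentiable (by simp)).pow 2)).add
        ((h0.differentiable (by simp)).mul (h2.differentiable (by simp)))).differentiableOn x hx
    have := hIc.is_const_of_fderivWithin_eq_zero hPdiff (fun x hx => ?_) hs hs₀
    · exact this
    · rw [fderivWithin_of_isOpen hIo hx]
      have : HasDerivAt P (deriv P x) x :=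
        (((differentiable_const _).add ((h1.differentiable (by simp)).pow 2)).add
          ((h0.differentiable (by simp)).mul (h2.differentiable (by simp))) x).hasDerivAt
      rw [hder0 x hx] at this
      ext
      simp [this.hasFDerivAt.fderiv]
  · -- backward: P constant on I → deriv P = 0 on I → identity holds
    rintro ⟨k, hk⟩ s hs
    rw [key s (hpos s hs).ne']
    have : deriv P s = 0 := by
      have hev : P =ᶠ[nhds s] fun _ => k :=
        Filter.eventuallyEq_of_mem (hIo.mem_nhds hs) (fun x hx => hk x hx)
      rw [hev.deriv_eq, deriv_const]
    rw [this, zero_div]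
end
end

section
/- (Extremal case, Corollary 2.) Let α₁ : I → ℝ be smooth with α₁(s) > 0 on an interval I and suppose 1 + α₁′(s)² + α₁(s)α₁″(s) = 0 for all s ∈ I (equivalently b(s) + c(s) = 0, i.e. the e₃-component of the mean curvature vector vanishes). Then there exist constants a₁ > 0 and a₂ such that α₁(s) = √(a₁ − (s + a₂)²) for all s ∈ I (and in particular a₁ − (s+a₂)² > 0 on I). -/
noncomputable section
open Real

lemma const_of_hasDerivAt_zero {I : Set ℝ} (hI : Convex ℝ I) {f : ℝ → ℝ}
    (h : ∀ s ∈ I, HasDerivAt f 0 s) {x y : ℝ} (hx : x ∈ I) (hy : y ∈ I) : f x = f y := by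
  have hb := hI.norm_image_sub_le_of_norm_hasDerivWithin_le (C := 0) (f' := fun _ => (0:ℝ))
    (fun s hs => (h s hs).hasDerivWithinAt) (fun s _ => by simp) hx hy
  simp only [zero_mul, norm_le_zero_iff, sub_eq_zero] at hb
  exact hb.symm

/-- extremal case, Corollary 2: if `1 + α₁′² + α₁α₁″ = 0` on `I`
and `α₁ > 0` there, then `α₁(s) = √(a₁ − (s+a₂)²)` for some constants `a₁ > 0`,
`a₂`, with `a₁ − (s+a₂)² > 0` on `I`. -/
theorem extremal_case_radial_function
    (I : Set ℝ) (hI : Convex ℝ I) (α₁ : ℝ → ℝ)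
    (hα₁ : ContDiff ℝ (⊤ : ℕ∞) α₁) (hpos : ∀ s ∈ I, 0 < α₁ s)
    (hP : ∀ s ∈ I, 1 + (deriv α₁ s) ^ 2 + α₁ s * deriv (deriv α₁) s = 0) :
    ∃ a₁ a₂ : ℝ, 0 < a₁ ∧
      ∀ s ∈ I, 0 < a₁ - (s + a₂) ^ 2 ∧ α₁ s = Real.sqrt (a₁ - (s + a₂) ^ 2) := by
  rcases I.eq_empty_or_nonempty with rfl | ⟨s₀, hs₀⟩
  · exact ⟨1, 0, one_pos, fun s hs => absurd hs (Set.notMem_empty s)⟩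
  have hd1 : Differentiable ℝ α₁ := hα₁.differentiable (by simp)
  have hd2 : Differentiable ℝ (deriv α₁) := (contDiff_infty_iff_deriv.mp (hα₁.of_le (by simp))).2.differentiable (by simp)
  -- f(s) = α₁ α₁' + s is constant on I
  have hf : ∀ s ∈ I, HasDerivAt (fun u => α₁ u * deriv α₁ u + u) 0 s := by
    intro s hs
    have h1 : HasDerivAt (fun u => α₁ u * deriv α₁ u + u)
        (deriv α₁ s * deriv α₁ s + α₁ s * deriv (deriv α₁) s + 1) s :=
      (((hd1 s).hasDerivAt.mul (hd2 s).hasDerivAt).add (hasDerivAt_id s))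
    have := hP s hs
    convert h1 using 1
    nlinarith [this]
  set C : ℝ := α₁ s₀ * deriv α₁ s₀ + s₀ with hC
  have hfc : ∀ s ∈ I, α₁ s * deriv α₁ s + s = C :=
    fun s hs => const_of_hasDerivAt_zero hI hf hs hs₀
  -- g(s) = α₁² + (s-C)² is constant on I
  have hg : ∀ s ∈ I, HasDerivAt (fun u => α₁ u ^ 2 + (u - C) ^ 2) 0 s := by
    intro s hs
    have h1 : HasDerivAt (fun u => α₁ u ^ 2 + (u - C) ^ 2)
        (2 * α₁ s ^ 1 * deriv α₁ s + 2 * (s - C) ^ 1 * 1) s :=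
      ((hd1 s).hasDerivAt.pow 2).add (((hasDerivAt_id s).sub_const C).pow 2)
    have := hfc s hs
    convert h1 using 1
    nlinarith [this]
  refine ⟨α₁ s₀ ^ 2 + (s₀ - C) ^ 2, -C, by nlinarith [pow_pos (hpos s₀ hs₀) 2, sq_nonneg (s₀ - C)], fun s hs => ?_⟩
  have hgc : α₁ s ^ 2 + (s - C) ^ 2 = α₁ s₀ ^ 2 + (s₀ - C) ^ 2 :=
    const_of_hasDerivAt_zero hI hg hs hs₀
  have hsq : α₁ s ^ 2 = α₁ s₀ ^ 2 + (s₀ - C) ^ 2 - (s + -C) ^ 2 := by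
    have : (s + -C) ^ 2 = (s - C) ^ 2 := by ring
    rw [this]; linarith
  have hp := hpos s hs
  constructor
  · rw [← hsq]; positivity
  · rw [← hsq, Real.sqrt_sq hp.le]
end
end
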